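/- arXiv:2307.12261 — 7 statements merged into one kernel-verified Lean document; each statement's English description precedes it below -/
import Mathlib

section
/- Let n be a positive integer. Then the determinant of the n×n matrix whose (i,j)-entry is the binomial coefficient C(i+j, i) (for 1 ≤ i, j ≤ n) equals n+1. -/
open Finset Matrix

lemma sumA (N m p : ℕ) (hm : m ≤ N) :
    ∑ k ∈ Finset.range N, m.choose (k+1) * p.choose (k+1) + 1 = (m+p).choose m := by
  have h1 : (m+p).choose m = ∑ k ∈ Finset.range (m+1), m.choose k * p.choose k := by
    rw [Nat.add_choose_eq, Finset.Nat.sum_antidiagonal_eq_sum_range_succ (fun a b => m.choose a * p.choose b)]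
    rw [← Finset.sum_range_reflect]
    refine Finset.sum_congr rfl fun k hk => ?_
    simp only [Finset.mem_range] at hk
    simp only [Nat.succ_sub_one]
    rw [Nat.choose_symm (show k ≤ m by omega), Nat.sub_sub_self (show k ≤ m by omega)]
  have h2 : ∑ k ∈ Finset.range (m+1), m.choose k * p.choose k
      = 1 + ∑ k ∈ Finset.range m, m.choose (k+1) * p.choose (k+1) := by
    rw [Finset.sum_range_succ']
    simp [add_comm]
  have h3 : ∑ k ∈ Finset.range m, m.choose (k+1) * p.choose (k+1)
      = ∑ k ∈ Finset.range N, m.choose (k+1) * p.choose (k+1) := by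
    refine Finset.sum_subset (Finset.range_subset_range.2 hm) fun k _ hk => ?_
    simp only [Finset.mem_range, not_lt] at hk
    rw [Nat.choose_eq_zero_of_lt (by omega), zero_mul]
  omega

lemma sumB (N m : ℕ) (h1 : 1 ≤ m) (hm : m ≤ N) :
    ∑ k ∈ Finset.range N, ((-1:ℤ))^k * m.choose (k+1) = 1 := by
  have key : ∑ k ∈ Finset.range m, ((-1:ℤ))^k * m.choose (k+1) = 1 := by
    have h0 := Int.alternating_sum_range_choose_of_ne (n := m) (by omega)
    rw [Finset.sum_range_succ'] at h0
    simp only [pow_succ, pow_zero, Nat.choose_zero_right, Nat.cast_one, mul_one, one_mul] at h0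
    have h2 : ∑ k ∈ Finset.range m, (-1:ℤ)^k * (-1) * m.choose (k+1) = -1 := by linarith
    calc ∑ k ∈ Finset.range m, ((-1:ℤ))^k * m.choose (k+1)
        = -∑ k ∈ Finset.range m, (-1:ℤ)^k * (-1) * m.choose (k+1) := by
          rw [← Finset.sum_neg_distrib]; refine Finset.sum_congr rfl fun k _ => by ring
      _ = 1 := by rw [h2]; ring
  have ext : ∑ k ∈ Finset.range N, ((-1:ℤ))^k * m.choose (k+1)
      = ∑ k ∈ Finset.range m, ((-1:ℤ))^k * m.choose (k+1) := by
    refine (Finset.sum_subset (Finset.range_subset_range.2 hm) fun k _ hk => ?_).symm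
    simp only [Finset.mem_range, not_lt] at hk
    rw [Nat.choose_eq_zero_of_lt (by omega)]
    simp
  rw [ext, key]

theorem stmt0 (n : ℕ) (hn : 0 < n) :
    Matrix.det (Matrix.of fun i j : Fin n =>
      (((((i : ℕ) + 1) + ((j : ℕ) + 1)).choose ((i : ℕ) + 1) : ℤ))) = n + 1 := by
  classical
  set L : Matrix (Fin n) (Fin n) ℤ :=
    Matrix.of (fun i k : Fin n => ((((i:ℕ)+1).choose ((k:ℕ)+1) : ℕ) : ℤ)) with hLdef
  set v : Fin n → ℤ := fun k => (-1)^(k:ℕ) with hvdef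
  have hB : ∀ i : Fin n, ∑ k : Fin n, L i k * v k = 1 := by
    intro i
    have h := sumB n ((i:ℕ)+1) (by omega) (by omega)
    rw [← h, ← Fin.sum_univ_eq_sum_range (fun k => ((-1:ℤ))^k * (((i:ℕ)+1).choose (k+1) : ℕ))]
    refine Finset.sum_congr rfl fun k _ => ?_
    simp only [hLdef, hvdef, Matrix.of_apply]
    ring
  have hB' : ∀ j : Fin n, ∑ l : Fin n, v l * L j l = 1 := by
    intro j; rw [← hB j]; exact Finset.sum_congr rfl fun _ _ => mul_comm _ _
  have hfac : (Matrix.of fun i j : Fin n =>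
      (((((i : ℕ) + 1) + ((j : ℕ) + 1)).choose ((i : ℕ) + 1) : ℤ)))
      = L * (1 + Matrix.replicateCol Unit v * Matrix.replicateRow Unit v) * Lᵀ := by
    have assoc : L * (Matrix.replicateCol Unit v * Matrix.replicateRow Unit v) * Lᵀ
        = (L * Matrix.replicateCol Unit v) * (Matrix.replicateRow Unit v * Lᵀ) := by
      simp only [Matrix.mul_assoc]
    ext i j
    rw [Matrix.mul_add, Matrix.mul_one, Matrix.add_mul, assoc, Matrix.add_apply]
    have t2 : ((L * Matrix.replicateCol Unit v) * (Matrix.replicateRow Unit v * Lᵀ)) i j = 1 := by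
      rw [Matrix.mul_apply, Fintype.sum_unique]
      have a1 : (L * Matrix.replicateCol Unit v) i default = 1 := by
        rw [Matrix.mul_apply]
        simp only [Matrix.replicateCol_apply]
        exact hB i
      have a2 : (Matrix.replicateRow Unit v * Lᵀ) default j = 1 := by
        rw [Matrix.mul_apply]
        simp only [Matrix.replicateRow_apply, Matrix.transpose_apply]
        exact hB' j
      rw [a1, a2, mul_one]
    have hLL : (L * Lᵀ) i j
        = ∑ k ∈ Finset.range n, (((((i:ℕ)+1).choose (k+1) : ℕ) : ℤ) * ((((j:ℕ)+1).choose (k+1) : ℕ) : ℤ)) := by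
      rw [Matrix.mul_apply,
        ← Fin.sum_univ_eq_sum_range (fun k => (((((i:ℕ)+1).choose (k+1) : ℕ) : ℤ) * ((((j:ℕ)+1).choose (k+1) : ℕ) : ℤ)))]
      refine Finset.sum_congr rfl fun k _ => ?_
      simp [hLdef]
    rw [t2, hLL]
    have hA := sumA n ((i:ℕ)+1) ((j:ℕ)+1) (by omega)
    rw [Matrix.of_apply, ← hA]
    push_cast
    ring
  have hLdet : L.det = 1 := by
    have ht : L.BlockTriangular OrderDual.toDual := by
      intro i j hij
      have hij' : (i:ℕ) < (j:ℕ) := hij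
      simp only [hLdef, Matrix.of_apply]
      rw [Nat.choose_eq_zero_of_lt (by omega)]
      simp
    rw [Matrix.det_of_lowerTriangular L ht]
    simp [hLdef]
  have hmid : (1 + Matrix.replicateCol Unit v * Matrix.replicateRow Unit v).det = (n : ℤ) + 1 := by
    rw [Matrix.det_one_add_replicateCol_mul_replicateRow]
    have hvv : v ⬝ᵥ v = (n : ℤ) := by
      have h1 : ∀ k : Fin n, v k * v k = 1 := by
        intro k
        simp only [hvdef, ← pow_add]
        exact Even.neg_one_pow ⟨(k:ℕ), rfl⟩
      simp only [dotProduct, h1]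
      simp
    rw [hvv]; ring
  rw [hfac, Matrix.det_mul, Matrix.det_mul, Matrix.det_transpose, hLdet, hmid]
  ring
end

section
/- Let n be a positive integer and let B(x,y) = Γ(x)Γ(y)/Γ(x+y) be the Beta function. Then det[B(i,j)]_{1≤i,j≤n} = (-1)^{n(n-1)/2} · ∏_{r=0}^{n-1} (r!)^3/(n+r)!. -/
open Finset Matrix

lemma cast_ne (a b : ℕ) : ((a : ℂ) + (b : ℂ) + 1) ≠ 0 := by
  have : ((a + b + 1 : ℕ) : ℂ) ≠ 0 := Nat.cast_ne_zero.mpr (by omega)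
  push_cast at this
  exact this

noncomputable def Mm (n : ℕ) : Matrix (Fin n) (Fin n) ℂ :=
  Matrix.of fun i j => (((i : ℕ) : ℂ) + ((j : ℕ) : ℂ) + 1)⁻¹

noncomputable def uu (n : ℕ) : Matrix (Fin (n+1)) (Fin (n+1)) ℂ :=
  Matrix.of fun k j => if k = Fin.last n ∧ j ≠ Fin.last n then 1 else 0

noncomputable def vv (n : ℕ) : Matrix (Fin (n+1)) (Fin (n+1)) ℂ :=
  Matrix.of fun i k => if i ≠ Fin.last n ∧ k = Fin.last n then 1 else 0

noncomputable def Pp (n : ℕ) : Matrix (Fin (n+1)) (Fin (n+1)) ℂ :=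
  Matrix.of fun i j => if j = Fin.last n then 1 else (((i : ℕ) : ℂ) + ((j : ℕ) : ℂ) + 1)⁻¹

noncomputable def Rr (n : ℕ) : Matrix (Fin (n+1)) (Fin (n+1)) ℂ :=
  Matrix.of fun i j => if j = Fin.last n then (if i = Fin.last n then 1 else 0)
    else if i = Fin.last n then 1 else (((i : ℕ) : ℂ) + ((j : ℕ) : ℂ) + 1)⁻¹

noncomputable def dr (n : ℕ) : Fin (n+1) → ℂ := fun i => (((i : ℕ) : ℂ) + (n : ℂ) + 1)⁻¹
noncomputable def dc (n : ℕ) : Fin (n+1) → ℂ := fun j =>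
  if j = Fin.last n then 1 else ((n : ℂ) - ((j : ℕ) : ℂ))
noncomputable def dr2 (n : ℕ) : Fin (n+1) → ℂ := fun i =>
  if i = Fin.last n then 1 else ((n : ℂ) - ((i : ℕ) : ℂ))
noncomputable def dc2 (n : ℕ) : Fin (n+1) → ℂ := fun j =>
  if j = Fin.last n then 1 else ((n : ℂ) + ((j : ℕ) : ℂ) + 1)⁻¹

lemma id1 (n : ℕ) : Mm (n+1) * (1 - uu n) =
    Matrix.diagonal (dr n) * (Pp n * Matrix.diagonal (dc n)) := by
  ext i j
  rw [Matrix.mul_sub, Matrix.mul_one, Matrix.sub_apply, Matrix.diagonal_mul, Matrix.mul_diagonal]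
  have hmu : (Mm (n+1) * uu n) i j = Mm (n+1) i (Fin.last n) * uu n (Fin.last n) j := by
    rw [Matrix.mul_apply]
    apply Finset.sum_eq_single
    · intro k _ hk
      have : uu n k j = 0 := by simp [uu, hk]
      rw [this, mul_zero]
    · intro h; exact absurd (Finset.mem_univ _) h
  rw [hmu]
  by_cases hj : j = Fin.last n
  · subst hj
    simp [Mm, uu, Pp, dr, dc, Fin.val_last]
  · have h1 : uu n (Fin.last n) j = 1 := by simp [uu, hj]
    have h2 : ((i : ℕ) : ℂ) + ((j : ℕ) : ℂ) + 1 ≠ 0 := cast_ne _ _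
    have h3 : ((i : ℕ) : ℂ) + (n : ℂ) + 1 ≠ 0 := cast_ne _ _
    have e1 : Mm (n+1) i j = (((i : ℕ) : ℂ) + ((j : ℕ) : ℂ) + 1)⁻¹ := rfl
    have e2 : Mm (n+1) i (Fin.last n) = (((i : ℕ) : ℂ) + (n : ℂ) + 1)⁻¹ := by
      simp [Mm, Fin.val_last]
    have e3 : Pp n i j = (((i : ℕ) : ℂ) + ((j : ℕ) : ℂ) + 1)⁻¹ := by simp [Pp, hj]
    have e4 : dc n j = ((n : ℂ) - ((j : ℕ) : ℂ)) := by simp [dc, hj]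
    have e5 : dr n i = (((i : ℕ) : ℂ) + (n : ℂ) + 1)⁻¹ := rfl
    rw [e1, e2, e3, e4, e5, h1, mul_one]
    field_simp
    try ring
    try tauto

lemma id2 (n : ℕ) : (1 - vv n) * Pp n =
    Matrix.diagonal (dr2 n) * (Rr n * Matrix.diagonal (dc2 n)) := by
  ext i j
  rw [Matrix.sub_mul, Matrix.one_mul, Matrix.sub_apply, Matrix.diagonal_mul, Matrix.mul_diagonal]
  have hvp : (vv n * Pp n) i j = vv n i (Fin.last n) * Pp n (Fin.last n) j := by
    rw [Matrix.mul_apply]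
    apply Finset.sum_eq_single
    · intro k _ hk
      have : vv n i k = 0 := by simp [vv, hk]
      rw [this, zero_mul]
    · intro h; exact absurd (Finset.mem_univ _) h
  rw [hvp]
  by_cases hi : i = Fin.last n
  · subst hi
    by_cases hj : j = Fin.last n
    · subst hj; simp [vv, Pp, Rr, dr2, dc2]
    · simp [vv, Pp, Rr, dr2, dc2, hj, Fin.val_last]
  · have h1 : vv n i (Fin.last n) = 1 := by simp [vv, hi]
    by_cases hj : j = Fin.last n
    · subst hj; simp [vv, Pp, Rr, dr2, dc2, hi, h1]
    · have h2 : ((i : ℕ) : ℂ) + ((j : ℕ) : ℂ) + 1 ≠ 0 := cast_ne _ _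
      have h3 : ((n : ℕ) : ℂ) + ((j : ℕ) : ℂ) + 1 ≠ 0 := cast_ne _ _
      have e1 : Pp n i j = (((i : ℕ) : ℂ) + ((j : ℕ) : ℂ) + 1)⁻¹ := by simp [Pp, hj]
      have e2 : Pp n (Fin.last n) j = ((n : ℂ) + ((j : ℕ) : ℂ) + 1)⁻¹ := by
        simp [Pp, hj, Fin.val_last]
      have e3 : Rr n i j = (((i : ℕ) : ℂ) + ((j : ℕ) : ℂ) + 1)⁻¹ := by simp [Rr, hi, hj]
      have e4 : dc2 n j = ((n : ℂ) + ((j : ℕ) : ℂ) + 1)⁻¹ := by simp [dc2, hj]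
      have e5 : dr2 n i = ((n : ℂ) - ((i : ℕ) : ℂ)) := by simp [dr2, hi]
      rw [e1, e2, e3, e4, e5, h1, one_mul]
      field_simp
      try ring
      try tauto

lemma detE (n : ℕ) : (1 - uu n).det = 1 := by
  have ht : (1 - uu n).BlockTriangular OrderDual.toDual := by
    intro i j hij
    have hij' : i < j := hij
    have : ¬ (i = Fin.last n ∧ j ≠ Fin.last n) := by
      rintro ⟨rfl, hj⟩
      exact absurd (Fin.le_last j) (not_le.mpr hij')
    simp [uu, Matrix.one_apply, (hij'.ne : i ≠ j), this]
  rw [Matrix.det_of_lowerTriangular _ ht]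
  have : ∀ i, (1 - uu n) i i = 1 := by
    intro i; simp [uu, Matrix.one_apply]
  simp [this]

lemma detF (n : ℕ) : (1 - vv n).det = 1 := by
  have ht : (1 - vv n).BlockTriangular id := by
    intro i j hij
    have hij' : (j : Fin (n+1)) < i := hij
    have : ¬ (i ≠ Fin.last n ∧ j = Fin.last n) := by
      rintro ⟨hi, rfl⟩
      exact absurd (Fin.le_last i) (not_le.mpr hij')
    simp [vv, Matrix.one_apply, (hij'.ne' : i ≠ j), this]
  rw [Matrix.det_of_upperTriangular ht]
  have : ∀ i, (1 - vv n) i i = 1 := by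
    intro i; simp [vv, Matrix.one_apply]
  simp [this]

lemma detR (n : ℕ) : (Rr n).det = (Mm n).det := by
  rw [Matrix.det_succ_column (Rr n) (Fin.last n)]
  rw [Finset.sum_eq_single (Fin.last n)]
  · have h1 : Rr n (Fin.last n) (Fin.last n) = 1 := by simp [Rr]
    have h2 : ((-1 : ℂ)) ^ ((Fin.last n : ℕ) + (Fin.last n : ℕ)) = 1 := by
      rw [Fin.val_last]
      exact Even.neg_one_pow ⟨n, by ring⟩
    rw [h1, h2, one_mul, one_mul]
    congr 1
    ext i j
    have hne : (Fin.castSucc i) ≠ Fin.last n := (Fin.castSucc_lt_last i).ne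
    simp [Rr, Mm, Fin.succAbove_last, hne, (Fin.castSucc_lt_last j).ne]
  · intro i _ hi
    have : Rr n i (Fin.last n) = 0 := by simp [Rr, hi]
    rw [this]; ring
  · intro h; exact absurd (Finset.mem_univ _) h

lemma step (n : ℕ) : (Mm (n+1)).det =
    (∏ i : Fin (n+1), dr n i) * (∏ j : Fin (n+1), dc n j) *
      ((∏ i : Fin (n+1), dr2 n i) * (∏ j : Fin (n+1), dc2 n j)) * (Mm n).det := by
  have h1 := congrArg Matrix.det (id1 n)
  rw [Matrix.det_mul, detE, mul_one, Matrix.det_mul, Matrix.det_mul, Matrix.det_diagonal,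
    Matrix.det_diagonal] at h1
  have h2 := congrArg Matrix.det (id2 n)
  rw [Matrix.det_mul, detF, one_mul, Matrix.det_mul, Matrix.det_mul, Matrix.det_diagonal,
    Matrix.det_diagonal, detR] at h2
  rw [h1, h2]
  ring

lemma prod_consec' (m k : ℕ) :
    ∏ l ∈ range k, ((m : ℂ) + 1 + l) = ((m + k).factorial : ℂ) / (m.factorial : ℂ) := by
  induction k with
  | zero => simp [div_self, Nat.cast_ne_zero.mpr (Nat.factorial_ne_zero m)]
  | succ k ih =>
    rw [prod_range_succ, ih]
    have h : ((m.factorial : ℂ)) ≠ 0 := Nat.cast_ne_zero.mpr (Nat.factorial_ne_zero _)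
    rw [Nat.add_succ, Nat.factorial_succ]
    push_cast
    field_simp
    ring

lemma prod_dr (n : ℕ) : ∏ i : Fin (n+1), dr n i =
    (n.factorial : ℂ) / ((2*n+1).factorial : ℂ) := by
  have h0 : ∏ i : Fin (n+1), dr n i = ∏ i ∈ range (n+1), (((i:ℕ):ℂ) + (n:ℂ) + 1)⁻¹ :=
    Fin.prod_univ_eq_prod_range (fun i => ((i:ℂ) + (n:ℂ) + 1)⁻¹) (n+1)
  have h1 : ∀ i ∈ range (n+1), (((i:ℕ):ℂ) + (n:ℂ) + 1)⁻¹ = (((n:ℂ) + 1 + i))⁻¹ := by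
    intro i _; ring_nf
  rw [h0, prod_congr rfl h1, prod_inv_distrib, prod_consec' n (n+1)]
  rw [show n + (n+1) = 2*n+1 by omega]
  rw [inv_div]

lemma prod_range_sub (n : ℕ) : ∏ j ∈ range n, ((n : ℂ) - (j : ℂ)) = (n.factorial : ℂ) := by
  have h1 : ∀ j ∈ range n, ((n : ℂ) - (j : ℂ)) = (((n - j : ℕ)) : ℂ) := by
    intro j hj
    rw [Nat.cast_sub (mem_range.mp hj).le]
  rw [prod_congr rfl h1, ← Nat.cast_prod, ← Nat.descFactorial_eq_prod_range,
    Nat.descFactorial_self]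

lemma prod_dc (n : ℕ) : ∏ j : Fin (n+1), dc n j = (n.factorial : ℂ) := by
  rw [Fin.prod_univ_castSucc]
  have h1 : dc n (Fin.last n) = 1 := by simp [dc]
  have h2 : ∀ j : Fin n, dc n (Fin.castSucc j) = ((n : ℂ) - ((j:ℕ) : ℂ)) := by
    intro j; simp [dc, (Fin.castSucc_lt_last j).ne]
  rw [h1, mul_one]
  rw [Finset.prod_congr rfl (fun j _ => h2 j)]
  rw [Fin.prod_univ_eq_prod_range (fun j => ((n : ℂ) - (j : ℂ))) n]
  exact prod_range_sub n

lemma prod_dr2 (n : ℕ) : ∏ i : Fin (n+1), dr2 n i = (n.factorial : ℂ) := by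
  rw [Fin.prod_univ_castSucc]
  have h1 : dr2 n (Fin.last n) = 1 := by simp [dr2]
  have h2 : ∀ j : Fin n, dr2 n (Fin.castSucc j) = ((n : ℂ) - ((j:ℕ) : ℂ)) := by
    intro j; simp [dr2, (Fin.castSucc_lt_last j).ne]
  rw [h1, mul_one]
  rw [Finset.prod_congr rfl (fun j _ => h2 j)]
  rw [Fin.prod_univ_eq_prod_range (fun j => ((n : ℂ) - (j : ℂ))) n]
  exact prod_range_sub n

lemma prod_dc2 (n : ℕ) : ∏ j : Fin (n+1), dc2 n j =
    (n.factorial : ℂ) / ((2*n).factorial : ℂ) := by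
  rw [Fin.prod_univ_castSucc]
  have h1 : dc2 n (Fin.last n) = 1 := by simp [dc2]
  have h2 : ∀ j : Fin n, dc2 n (Fin.castSucc j) = ((n : ℂ) + ((j:ℕ) : ℂ) + 1)⁻¹ := by
    intro j; simp [dc2, (Fin.castSucc_lt_last j).ne]
  rw [h1, mul_one]
  rw [Finset.prod_congr rfl (fun j _ => h2 j)]
  have h3 : ∀ j ∈ range n, ((n:ℂ) + (j:ℂ) + 1)⁻¹ = (((n:ℂ) + 1 + j))⁻¹ := by
    intro j _; ring_nf
  rw [Fin.prod_univ_eq_prod_range (fun j => ((n : ℂ) + (j : ℂ) + 1)⁻¹) n,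
    prod_congr rfl h3, prod_inv_distrib, prod_consec' n n, show n + n = 2*n by omega, inv_div]

lemma hilbert (n : ℕ) : (Mm n).det =
    ∏ r ∈ range n, (r.factorial : ℂ) ^ 3 / ((n + r).factorial : ℂ) := by
  induction n with
  | zero => simp [Mm]
  | succ n ih =>
    rw [step, prod_dr, prod_dc, prod_dr2, prod_dc2, ih]
    have hsplit : ∏ r ∈ range (n+1), (r.factorial : ℂ) ^ 3 / (((n+1) + r).factorial : ℂ)
        = (∏ r ∈ range n, (r.factorial : ℂ) ^ 3 / (((n+1) + r).factorial : ℂ)) *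
          ((n.factorial : ℂ) ^ 3 / ((2*n+1).factorial : ℂ)) := by
      rw [prod_range_succ, show (n+1) + n = 2*n+1 by omega]
    have hshift : ∀ r ∈ range n, (r.factorial : ℂ) ^ 3 / (((n+1) + r).factorial : ℂ)
        = ((r.factorial : ℂ) ^ 3 / ((n + r).factorial : ℂ)) * (((n:ℂ) + 1 + r))⁻¹ := by
      intro r _
      rw [show (n+1) + r = (n + r) + 1 by omega, Nat.factorial_succ]
      push_cast
      rw [show ((n:ℂ) + (r:ℂ) + 1) = ((n:ℂ) + 1 + (r:ℂ)) by ring,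
        div_mul_eq_div_div_swap, div_eq_mul_inv]
    rw [hsplit, prod_congr rfl hshift, prod_mul_distrib, prod_inv_distrib,
      prod_consec' n n, show n + n = 2*n by omega]
    have ha : ((n.factorial : ℂ)) ≠ 0 := Nat.cast_ne_zero.mpr (Nat.factorial_ne_zero _)
    have hb : (((2*n).factorial : ℂ)) ≠ 0 := Nat.cast_ne_zero.mpr (Nat.factorial_ne_zero _)
    have hc : (((2*n+1).factorial : ℂ)) ≠ 0 := Nat.cast_ne_zero.mpr (Nat.factorial_ne_zero _)
    rw [inv_div]
    field_simp

lemma pascal_step (j : ℕ) (z : ℕ → ℂ) :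
    ∑ l ∈ range (j + 2), (-1 : ℂ) ^ l * (((j + 1).choose l : ℕ) : ℂ) * z l
      = ∑ l ∈ range (j + 1), (-1 : ℂ) ^ l * ((j.choose l : ℕ) : ℂ) * z l
        - ∑ l ∈ range (j + 1), (-1 : ℂ) ^ l * ((j.choose l : ℕ) : ℂ) * z (l + 1) := by
  rw [Finset.sum_range_succ' _ (j + 1),
    Finset.sum_range_succ' (fun l => (-1 : ℂ) ^ l * ((j.choose l : ℕ) : ℂ) * z l) j]
  have h1 : ∀ l ∈ range (j + 1), (-1 : ℂ) ^ (l + 1) * (((j + 1).choose (l + 1) : ℕ) : ℂ) * z (l + 1)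
      = -((-1 : ℂ) ^ l * ((j.choose l : ℕ) : ℂ) * z (l + 1))
        - (-1 : ℂ) ^ l * ((j.choose (l + 1) : ℕ) : ℂ) * z (l + 1) := by
    intro l _
    rw [Nat.choose_succ_succ]
    push_cast
    ring
  rw [Finset.sum_congr rfl h1, Finset.sum_sub_distrib, Finset.sum_neg_distrib]
  have h2 : ∑ l ∈ range (j + 1), (-1 : ℂ) ^ l * ((j.choose (l + 1) : ℕ) : ℂ) * z (l + 1)
      = ∑ l ∈ range j, (-1 : ℂ) ^ l * ((j.choose (l + 1) : ℕ) : ℂ) * z (l + 1) := by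
    rw [Finset.sum_range_succ, Nat.choose_succ_self]
    simp
  rw [h2]
  have h3 : ∑ l ∈ range j, (-1 : ℂ) ^ (l + 1) * ((j.choose (l + 1) : ℕ) : ℂ) * z (l + 1)
      = -∑ l ∈ range j, (-1 : ℂ) ^ l * ((j.choose (l + 1) : ℕ) : ℂ) * z (l + 1) := by
    rw [← Finset.sum_neg_distrib]
    exact Finset.sum_congr rfl fun l _ => by ring
  rw [h3]
  simp
  ring

lemma key_sum (j : ℕ) : ∀ i : ℕ,
    ∑ l ∈ range (j + 1), ((-1 : ℂ)) ^ l * (j.choose l : ℂ) * (((i : ℂ) + l + 1))⁻¹ =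
      (i.factorial : ℂ) * (j.factorial : ℂ) / ((i + j + 1).factorial : ℂ) := by
  induction j with
  | zero =>
    intro i
    have h : ((i : ℂ) + 1) ≠ 0 := by
      have := Nat.cast_ne_zero (R := ℂ).mpr (Nat.succ_ne_zero i)
      push_cast at this; exact this
    have hf : ((i.factorial : ℂ)) ≠ 0 := Nat.cast_ne_zero.mpr (Nat.factorial_ne_zero _)
    simp [Nat.factorial_succ]
    field_simp
  | succ j ih =>
    intro i
    have hz : ∀ l : ℕ, ((((i + 1) : ℕ) : ℂ) + l + 1)⁻¹ = (((i : ℂ) + (l + 1) + 1))⁻¹ := by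
      intro l; push_cast; ring_nf
    have h1 := pascal_step j (fun l => (((i : ℂ) + l + 1))⁻¹)
    rw [h1, ih i]
    have h4 : ∑ l ∈ range (j + 1), (-1 : ℂ) ^ l * ((j.choose l : ℕ) : ℂ) * (((i : ℂ) + (l + 1) + 1))⁻¹
        = ((i+1).factorial : ℂ) * (j.factorial : ℂ) / (((i + 1) + j + 1).factorial : ℂ) := by
      rw [← ih (i + 1)]
      refine Finset.sum_congr rfl fun l _ => ?_
      rw [hz l]
    push_cast at h4 ⊢
    rw [h4]
    have e1 : (i + (j + 1) + 1) = ((i + j + 1) + 1) := by ring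
    have e2 : ((i + 1) + j + 1) = ((i + j + 1) + 1) := by ring
    rw [e1, e2, Nat.factorial_succ (i + j + 1), Nat.factorial_succ j, Nat.factorial_succ i]
    have h2 : ((i + j + 1).factorial : ℂ) ≠ 0 := Nat.cast_ne_zero.mpr (Nat.factorial_ne_zero _)
    have h5 : ((i + j + 1 + 1 : ℕ) : ℂ) ≠ 0 := Nat.cast_ne_zero.mpr (by omega)
    push_cast at h5 ⊢
    field_simp
    ring

noncomputable def Tt (n : ℕ) : Matrix (Fin n) (Fin n) ℂ :=
  Matrix.of fun l j => (-1 : ℂ) ^ (l : ℕ) * (((j : ℕ).choose (l : ℕ) : ℕ) : ℂ)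

lemma detT (n : ℕ) : (Tt n).det = (-1 : ℂ) ^ (n * (n - 1) / 2) := by
  have ht : (Tt n).BlockTriangular id := by
    intro l j hlj
    have : (j : ℕ) < (l : ℕ) := hlj
    simp [Tt, Nat.choose_eq_zero_of_lt this]
  rw [Matrix.det_of_upperTriangular ht]
  have h1 : ∀ l : Fin n, Tt n l l = (-1 : ℂ) ^ (l : ℕ) := by
    intro l; simp [Tt]
  rw [Finset.prod_congr rfl (fun l _ => h1 l), Finset.prod_pow_eq_pow_sum,
    Fin.sum_univ_eq_sum_range (fun l => l) n, Finset.sum_range_id]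

lemma hbeta (i j : ℕ) : Complex.betaIntegral ((i + 1 : ℕ)) ((j + 1 : ℕ)) =
    (i.factorial : ℂ) * (j.factorial : ℂ) / ((i + j + 1).factorial : ℂ) := by
  have hu : 0 < (((i + 1 : ℕ) : ℂ)).re := by
    rw [Complex.natCast_re]
    exact_mod_cast Nat.succ_pos i
  have hc : (((j + 1 : ℕ)) : ℂ) = ((j : ℂ) + 1) := by push_cast; ring
  rw [hc, Complex.betaIntegral_eval_nat_add_one_right hu j]
  have h2 : ∀ l ∈ range (j + 1), (((i + 1 : ℕ) : ℂ) + l) = ((i : ℂ) + 1 + l) := by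
    intro l _; push_cast; ring
  rw [prod_congr rfl h2, prod_consec' i (j + 1)]
  have hf : ((i.factorial : ℂ)) ≠ 0 := Nat.cast_ne_zero.mpr (Nat.factorial_ne_zero _)
  have hg : (((i + (j + 1)).factorial : ℂ)) ≠ 0 := Nat.cast_ne_zero.mpr (Nat.factorial_ne_zero _)
  rw [show i + (j + 1) = i + j + 1 by omega] at *
  field_simp

lemma B_eq (n : ℕ) :
    (Matrix.of fun i j : Fin n =>
      Complex.betaIntegral (((i : ℕ) + 1 : ℕ)) (((j : ℕ) + 1 : ℕ))) = Mm n * Tt n := by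
  ext i j
  rw [Matrix.mul_apply]
  have h1 : ∀ l : Fin n, Mm n i l * Tt n l j
      = (-1 : ℂ) ^ (l : ℕ) * (((j : ℕ).choose (l : ℕ) : ℕ) : ℂ) * (((i : ℕ) : ℂ) + (l : ℕ) + 1)⁻¹ := by
    intro l; simp [Mm, Tt]; ring
  rw [Finset.sum_congr rfl (fun l _ => h1 l)]
  rw [Fin.sum_univ_eq_sum_range
    (fun l => (-1 : ℂ) ^ l * (((j : ℕ).choose l : ℕ) : ℂ) * (((i : ℕ) : ℂ) + l + 1)⁻¹) n]
  have hsub : ∑ l ∈ range ((j : ℕ) + 1),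
      (-1 : ℂ) ^ l * (((j : ℕ).choose l : ℕ) : ℂ) * (((i : ℕ) : ℂ) + l + 1)⁻¹
      = ∑ l ∈ range n, (-1 : ℂ) ^ l * (((j : ℕ).choose l : ℕ) : ℂ) * (((i : ℕ) : ℂ) + l + 1)⁻¹ := by
    apply Finset.sum_subset
    · exact Finset.range_subset_range.mpr j.isLt
    · intro l _ hl
      have : (j : ℕ) < l := by
        simp only [Finset.mem_range, not_lt] at hl; omega
      simp [Nat.choose_eq_zero_of_lt this]
  rw [← hsub, key_sum (j : ℕ) (i : ℕ), Matrix.of_apply, hbeta]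

theorem stmt1 (n : ℕ) (hn : 0 < n) :
    Matrix.det (Matrix.of fun i j : Fin n =>
      Complex.betaIntegral (((i : ℕ) + 1 : ℕ)) (((j : ℕ) + 1 : ℕ))) =
      (-1 : ℂ) ^ (n * (n - 1) / 2) *
        ∏ r ∈ Finset.range n, ((r.factorial : ℂ) ^ 3 / ((n + r).factorial : ℂ)) := by
  rw [B_eq n, Matrix.det_mul, hilbert n, detT n]
  ring
end

section
/- Let m ≥ 1 be an integer. The sign of the permutation of Z/mZ given by x ↦ -x equals (-1)^{(m-1)(m-2)/2}. -/
open Equiv Equiv.Perm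

private lemma negpow_congr (a b : ℕ) (h : a % 2 = b % 2) : ((-1 : ℤ)) ^ a = (-1) ^ b := by
  rw [← Nat.mod_add_div a 2, ← Nat.mod_add_div b 2, pow_add, pow_add, pow_mul, pow_mul, h]
  simp

private lemma negpow_congr_units (a b : ℕ) (h : a % 2 = b % 2) :
    ((-1 : ℤˣ)) ^ a = (-1) ^ b := by
  rw [← Nat.mod_add_div a 2, ← Nat.mod_add_div b 2, pow_add, pow_add, pow_mul, pow_mul, h]
  norm_num

private lemma parity_helper (c k : ℕ) : ((2 * c + 1) * k) % 2 = k % 2 := by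
  have : (2 * c + 1) * k = 2 * (c * k) + k := by ring
  omega

private lemma sign_involution {α : Type*} [DecidableEq α] [Fintype α] (σ : Equiv.Perm α)
    (hσ : σ ^ 2 = 1) : Equiv.Perm.sign σ = (-1) ^ (σ.support.card / 2) := by
  have h2 : ∀ n ∈ σ.cycleType, n = 2 := fun n hn =>
    le_antisymm (Nat.le_of_dvd two_pos ((Equiv.Perm.dvd_of_mem_cycleType hn).trans
      (orderOf_dvd_of_pow_eq_one hσ))) (Equiv.Perm.two_le_of_mem_cycleType hn)
  have hrep : σ.cycleType = Multiset.replicate (Multiset.card σ.cycleType) 2 :=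
    Multiset.eq_replicate_card.mpr h2
  have hsum : σ.support.card = 2 * Multiset.card σ.cycleType := by
    rw [← Equiv.Perm.sum_cycleType, hrep]
    simp [Multiset.sum_replicate, mul_comm]
  rw [Equiv.Perm.sign_of_cycleType, hsum, Nat.mul_div_cancel_left _ two_pos, hrep]
  simp only [Multiset.sum_replicate, Multiset.card_replicate, smul_eq_mul]
  apply negpow_congr_units
  omega

theorem stmt3 (m : ℕ) [NeZero m]
    (π : Equiv.Perm (ZMod m)) (hπ : ∀ x : ZMod m, π x = -x) :
    (Equiv.Perm.sign π : ℤ) = (-1) ^ ((m - 1) * (m - 2) / 2) := by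
  have hm : 1 ≤ m := Nat.one_le_iff_ne_zero.mpr (NeZero.ne m)
  have hinv : π ^ 2 = 1 := by
    ext x
    simp [pow_succ, Equiv.Perm.mul_apply, hπ]
  have hcard : Fintype.card (ZMod m) = m := ZMod.card m
  have hfix : ∀ x : ZMod m, π x = x ↔ (x = 0 ∨ 2 * x.val = m) := by
    intro x
    rw [hπ, ZMod.neg_eq_self_iff]
  have hsupp : π.support = Finset.univ.filter (fun x : ZMod m => ¬(x = 0 ∨ 2 * x.val = m)) := by
    ext x
    simp only [Equiv.Perm.mem_support, Finset.mem_filter, Finset.mem_univ, true_and]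
    exact not_congr (hfix x)
  have hcard_supp : π.support.card = m - (Finset.univ.filter
      (fun x : ZMod m => x = 0 ∨ 2 * x.val = m)).card := by
    rw [hsupp, Finset.filter_not, Finset.card_sdiff_of_subset (Finset.filter_subset _ _),
      Finset.card_univ, hcard]
  have hsign : (Equiv.Perm.sign π : ℤ) = (-1) ^ (π.support.card / 2) := by
    rw [sign_involution π hinv]
    push_cast
    ring
  rcases Nat.even_or_odd m with hev | hod
  · -- m even, m = t + t
    obtain ⟨t, ht⟩ := hev
    have htpos : 1 ≤ t := by omega
    have hfixset : (Finset.univ.filter (fun x : ZMod m => x = 0 ∨ 2 * x.val = m))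
        = {0, ((t : ℕ) : ZMod m)} := by
      ext x
      simp only [Finset.mem_filter, Finset.mem_univ, true_and, Finset.mem_insert,
        Finset.mem_singleton]
      constructor
      · rintro (h | h)
        · exact Or.inl h
        · right
          have : x.val = t := by omega
          rw [← this, ZMod.natCast_val, ZMod.cast_id]
      · rintro (h | h)
        · exact Or.inl h
        · right
          subst h
          rw [ZMod.val_natCast_of_lt (by omega)]
          omega
    have hne : ((t : ℕ) : ZMod m) ≠ 0 := by
      intro h
      have := (ZMod.natCast_eq_zero_iff t m).mp h
      have := Nat.le_of_dvd (by omega) this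
      omega
    have hc2 : (Finset.univ.filter (fun x : ZMod m => x = 0 ∨ 2 * x.val = m)).card = 2 := by
      rw [hfixset, Finset.card_insert_of_notMem (by simpa using (Ne.symm hne)),
        Finset.card_singleton]
    rw [hsign, hcard_supp, hc2]
    apply negpow_congr
    have e1 : (m - 1) * (m - 2) / 2 = (2 * (t - 1) + 1) * (t - 1) := by
      have h1 : m - 1 = 2 * (t - 1) + 1 := by omega
      have h2 : m - 2 = 2 * (t - 1) := by omega
      rw [h1, h2, show (2 * (t - 1) + 1) * (2 * (t - 1)) = 2 * ((2 * (t - 1) + 1) * (t - 1))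
        by ring, Nat.mul_div_cancel_left _ two_pos]
    rw [e1, parity_helper]
    omega
  · -- m odd, m = 2 s + 1
    have hfixset : (Finset.univ.filter (fun x : ZMod m => x = 0 ∨ 2 * x.val = m)) = {0} := by
      ext x
      simp only [Finset.mem_filter, Finset.mem_univ, true_and, Finset.mem_singleton]
      constructor
      · rintro (h | h)
        · exact h
        · exfalso; rcases hod with ⟨s, hs⟩; omega
      · intro h; exact Or.inl h
    rw [hsign, hcard_supp, hfixset, Finset.card_singleton]
    apply negpow_congr
    rcases hod with ⟨s, hs⟩
    rcases Nat.eq_zero_or_pos s with h0 | h1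
    · subst hs; simp [h0]
    · have e1 : (m - 1) * (m - 2) / 2 = (2 * (s - 1) + 1) * s := by
        have h1 : m - 1 = 2 * s := by omega
        have h2 : m - 2 = 2 * (s - 1) + 1 := by omega
        rw [h1, h2, show (2 * s) * (2 * (s - 1) + 1) = 2 * ((2 * (s - 1) + 1) * s) by ring,
          Nat.mul_div_cancel_left _ two_pos]
      rw [e1, parity_helper]
      omega
end

section
/- Let q ≥ 3 be a prime power and χ a generator of the group of multiplicative characters of F_q (with the convention χ^i(0)=0). Then det[J_q(χ^i, χ^j)]_{1≤i,j≤q-2} = (q-1)^{q-3}, where J_q(χ^i,χ^j) = Σ_{x∈F_q} χ^i(x)·χ^j(1-x) is the Jacobi sum. -/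
/-! Let `S = F \ {0, 1}` and `C = (χ^i(x))_{i, x ∈ S}`, a square matrix of size `q - 2`. As
`χ^i(0) = 0`, the Jacobi sums only see `S`, so the Jacobi matrix is `C (C ∘ σ)ᵀ` for the
involution `σ x = 1 - x` of `S`, with determinant `sign σ · (det C)²`. Replacing `σ` by
`τ x = x⁻¹` gives instead the Gram matrix `(∑_{x ∈ S} χ^i χ^{-j}(x))_{i,j}`, which by
orthogonality of characters is `(q - 1) I - J`, of determinant `(q - 1)^(q - 3)`. Finally `σ` and
`τ` have the same sign because `στ : x ↦ 1 - 1/x` has order 3. -/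

open Matrix Finset Equiv Equiv.Perm Function

theorem Equiv.Perm.sign_eq_one_of_pow_eq_one {α : Type*} [Fintype α] [DecidableEq α]
    {σ : Perm α} {n : ℕ} (hn : Odd n) (h : σ ^ n = 1) : sign σ = 1 := by
  have := congrArg sign h
  rwa [map_pow, map_one, Int.units_pow_eq_pow_mod_two, Nat.odd_iff.mp hn, pow_one] at this

namespace Matrix

variable {m n R : Type*} [Fintype m] [DecidableEq m] [Fintype n] [DecidableEq n] [CommRing R]

theorem det_mul_transpose_submatrix_perm (e : m ≃ n) (C : Matrix n m R) (σ : Perm m) :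
    det (C * (C.submatrix id σ)ᵀ) = sign σ * det (C.submatrix id e.symm) ^ 2 := by
  set D := C.submatrix id e.symm
  have hC : C * (C.submatrix id σ)ᵀ = D * (D.submatrix id (e.permCongr σ))ᵀ := by
    rw [← submatrix_id_id (C * _), ← submatrix_mul_equiv C _ id e.symm id]
    congr 1
    ext i j
    simp [D, Equiv.permCongr_apply]
  rw [hC, det_mul, det_transpose, det_permute', sign_permCongr]
  ring

theorem det_mul_transpose_submatrix_perm_eq_of_sign_eq (hmn : Fintype.card m = Fintype.card n)
    (C : Matrix n m R) {σ τ : Perm m} (h : sign σ = sign τ) :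
    det (C * (C.submatrix id σ)ᵀ) = det (C * (C.submatrix id τ)ᵀ) := by
  let e := Fintype.equivOfCardEq hmn
  rw [det_mul_transpose_submatrix_perm e, det_mul_transpose_submatrix_perm e, h]

theorem det_smul_one_sub_all_ones {K ι : Type*} [Field K] [Fintype ι] [DecidableEq ι]
    {a : K} (ha : a ≠ 0) :
    det (a • 1 - of fun _ _ : ι => (1 : K)) =
      a ^ Fintype.card ι * (1 - Fintype.card ι / a) := by
  have : a • 1 - of (fun _ _ : ι => (1 : K)) =
      a • (1 + replicateCol (Fin 1) (fun _ : ι => -a⁻¹) *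
        replicateRow (Fin 1) (fun _ : ι => (1 : K))) := by
    ext i j
    by_cases hij : i = j <;> simp [hij, mul_apply, mul_add, ha, sub_eq_add_neg]
  rw [this, det_smul, det_one_add_mul_comm, det_unique]
  simp [mul_apply, div_eq_mul_inv, sub_eq_add_neg]

end Matrix

abbrev ZeroOneCompl (F : Type*) [Field F] := {x : F // x ≠ 0 ∧ x ≠ 1}

namespace ZeroOneCompl

variable {F : Type*} [Field F]

def oneSub : Perm (ZeroOneCompl F) :=
  Involutive.toPerm (fun x => ⟨1 - x, sub_ne_zero.mpr x.2.2.symm, by simpa using x.2.1⟩)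
    fun x => Subtype.ext (sub_sub_cancel 1 x.1)

def inv : Perm (ZeroOneCompl F) :=
  Involutive.toPerm (fun x => ⟨x.1⁻¹, inv_ne_zero x.2.1, inv_ne_one.mpr x.2.2⟩)
    fun x => Subtype.ext (inv_inv x.1)

@[simp] lemma coe_oneSub (x : ZeroOneCompl F) : (oneSub x : F) = 1 - x := rfl

@[simp] lemma coe_inv (x : ZeroOneCompl F) : (inv x : F) = (x : F)⁻¹ := rfl

lemma oneSub_mul_inv_pow_three : (oneSub * inv : Perm (ZeroOneCompl F)) ^ 3 = 1 := by
  ext ⟨x, hx0, hx1⟩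
  have hx1' : x - 1 ≠ 0 := sub_ne_zero.mpr hx1
  simp only [pow_succ, pow_zero, one_mul, Perm.mul_apply, coe_oneSub, coe_inv, Perm.coe_one, id]
  field_simp
  ring

variable [Fintype F] [DecidableEq F]

lemma sign_oneSub :
    sign (oneSub : Perm (ZeroOneCompl F)) = sign (inv : Perm (ZeroOneCompl F)) := by
  have h : sign (oneSub * inv : Perm (ZeroOneCompl F)) = 1 :=
    sign_eq_one_of_pow_eq_one (by decide) (oneSub_mul_inv_pow_three (F := F))
  rw [map_mul] at h
  rw [eq_inv_of_mul_eq_one_left h, Int.units_inv_eq_self]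

lemma card_eq : Fintype.card (ZeroOneCompl F) = Fintype.card F - 2 := by
  have : ({x | x ≠ 0 ∧ x ≠ 1} : Finset F) = {0, 1}ᶜ := by ext; simp
  rw [Fintype.card_subtype, this, card_compl, card_pair zero_ne_one]

lemma sum_eq {R : Type*} [AddCommGroup R] (f : F → R) (h0 : f 0 = 0) :
    ∑ x : ZeroOneCompl F, f x = ∑ x, f x - f 1 := by
  rw [← Finset.sum_compl_add_sum {0, 1} f, Finset.sum_pair zero_ne_one, h0, zero_add,
    add_sub_cancel_right]
  exact (Finset.sum_subtype _ (by simp) f).symm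

end ZeroOneCompl

section Characters

variable {F ι R : Type*} [Field F] [Fintype F] [DecidableEq F] [CommRing R]

namespace ZeroOneCompl

lemma sum_one_mulChar :
    ∑ x : ZeroOneCompl F, (1 : MulChar F R) x = (Fintype.card F : R) - 2 := by
  have h2 : 2 ≤ Fintype.card F := Fintype.one_lt_card
  simp only [fun x : ZeroOneCompl F => MulChar.one_apply (R' := R) (Ne.isUnit x.2.1),
    sum_const, card_univ, card_eq, nsmul_one, Nat.cast_sub h2, Nat.cast_ofNat]

lemma sum_mulChar_of_ne_one [IsDomain R] {ψ : MulChar F R} (hψ : ψ ≠ 1) :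
    ∑ x : ZeroOneCompl F, ψ x = -1 := by
  rw [sum_eq _ ψ.map_zero, ψ.map_one, MulChar.sum_eq_zero_of_ne_one hψ, zero_sub]

end ZeroOneCompl

def charValueMatrix (ψ : ι → MulChar F R) : Matrix ι (ZeroOneCompl F) R :=
  of fun i x => ψ i x

lemma jacobiSum_matrix_eq [Nontrivial R] (ψ : ι → MulChar F R) :
    of (fun i j => jacobiSum (ψ i) (ψ j)) =
      charValueMatrix ψ * ((charValueMatrix ψ).submatrix id ZeroOneCompl.oneSub)ᵀ := by
  ext i j
  have h := ZeroOneCompl.sum_eq (fun x => ψ i x * ψ j (1 - x))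
    (by rw [(ψ i).map_zero, zero_mul])
  rw [sub_self, (ψ j).map_zero, mul_zero, sub_zero] at h
  rw [of_apply, jacobiSum, ← h]
  rfl

lemma charValueMatrix_mul_inv_transpose [IsDomain R] [DecidableEq ι] {ψ : ι → MulChar F R}
    (hψ : Injective ψ) :
    charValueMatrix ψ * ((charValueMatrix ψ).submatrix id ZeroOneCompl.inv)ᵀ =
      ((Fintype.card F : R) - 1) • 1 - of fun _ _ => 1 := by
  ext i j
  have h (x : ZeroOneCompl F) : ψ i x * ψ j (x : F)⁻¹ = (ψ i * (ψ j)⁻¹) x := by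
    rw [MulChar.coeToFun_mul, Pi.mul_apply, MulChar.inv_apply']
  simp only [Matrix.mul_apply, charValueMatrix, transpose_apply, submatrix_apply, of_apply, id,
    ZeroOneCompl.coe_inv, h, Matrix.sub_apply, Matrix.smul_apply, Matrix.one_apply, smul_eq_mul]
  by_cases hij : i = j
  · rw [hij, mul_inv_cancel, ZeroOneCompl.sum_one_mulChar, if_pos rfl]
    ring
  · rw [ZeroOneCompl.sum_mulChar_of_ne_one (mt mul_inv_eq_one.mp (hψ.ne hij)), if_neg hij]
    ring

end Characters

theorem det_jacobiSum_matrix {F ι K : Type*} [Field F] [Fintype F] [Field K]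
    [CharZero K] [Fintype ι] [DecidableEq ι] {ψ : ι → MulChar F K} (hψ : Injective ψ)
    (hι : Fintype.card ι = Fintype.card F - 2) (hF : 3 ≤ Fintype.card F) :
    det (of fun i j => jacobiSum (ψ i) (ψ j)) =
      ((Fintype.card F : K) - 1) ^ (Fintype.card F - 3) := by
  classical
  obtain ⟨k, hk⟩ : ∃ k, Fintype.card F = k + 3 := ⟨_, (Nat.sub_add_cancel hF).symm⟩
  have ha : (Fintype.card F : K) - 1 ≠ 0 :=
    sub_ne_zero.mpr (Nat.cast_ne_one.mpr (by omega))
  rw [jacobiSum_matrix_eq, det_mul_transpose_submatrix_perm_eq_of_sign_eq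
    (by rw [hι, ZeroOneCompl.card_eq]) _ ZeroOneCompl.sign_oneSub,
    charValueMatrix_mul_inv_transpose hψ, det_smul_one_sub_all_ones ha, hι]
  rw [hk] at ha ⊢
  push_cast at ha ⊢
  field_simp
  ring

theorem stmt9 {F : Type*} [Field F] [Fintype F] (q : ℕ) (hq : Fintype.card F = q)
    (hq3 : 3 ≤ q) (χ : MulChar F ℂ) (hχ : ∀ ψ : MulChar F ℂ, ∃ k : ℕ, ψ = χ ^ k) :
    Matrix.det (Matrix.of fun i j : Fin (q - 2) =>
      ∑ x : F, (χ ^ ((i : ℕ) + 1)) x * (χ ^ ((j : ℕ) + 1)) (1 - x)) =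
      ((q : ℂ) - 1) ^ (q - 3) := by
  classical
  subst hq
  have hord : orderOf χ = Fintype.card F - 1 := by
    rw [orderOf_eq_card_of_forall_mem_zpowers fun ψ => ?_,
      MulChar.card_eq_card_units_of_hasEnoughRootsOfUnity, Nat.card_eq_fintype_card,
      Fintype.card_units]
    obtain ⟨k, rfl⟩ := hχ ψ
    exact Subgroup.npow_mem_zpowers χ k
  have hinj : Injective fun i : Fin (Fintype.card F - 2) => χ ^ ((i : ℕ) + 1) := by
    intro i j h
    have := pow_injOn_Iio_orderOf (x := χ) (by simp [hord]; omega) (by simp [hord]; omega) h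
    exact Fin.ext (by omega)
  exact det_jacobiSum_matrix hinj (Fintype.card_fin _) hq3
end

section
/- Let q be a prime power, k a positive divisor of q-1 with m=(q-1)/k, and χ a generator of the character group of F_q^×. Then det[J_q(χ^{ki}, χ^{kj})]_{1≤i,j≤m-1} is a rational integer and does not depend on the choice of the generator χ. -/
/-!
Put `η = χ ^ k`, a character of exact order `m`. Another generator of the character group is
`χ ^ t` with `t` prime to `q - 1`; it replaces `η` by `η ^ t`, and since `i ↦ t * i` permutes the
nonzero residues modulo `m`, this permutes the rows and the columns of `(J(η ^ i, η ^ j))` by the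
same permutation, leaving the determinant unchanged. The characters take values in `ℚ(ζ_{q-1})`,
and a Galois automorphism `σ` sends the generator `χ` to the generator `σ ∘ χ`, so the determinant
is Galois invariant, hence rational. It is also an algebraic integer, hence a rational integer.
-/

open Matrix

namespace Nat.Coprime

variable {t m : ℕ}

lemma mul_succ_mod_pos (ht : t.Coprime m) (i : Fin (m - 1)) : 0 < t * ((i : ℕ) + 1) % m := by
  refine Nat.pos_of_ne_zero fun h => ?_
  have hdvd : m ∣ (i : ℕ) + 1 := ht.symm.dvd_of_dvd_mul_left (Nat.dvd_of_mod_eq_zero h)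
  have := Nat.le_of_dvd (Nat.succ_pos _) hdvd
  omega

lemma mul_succ_mod_injective (ht : t.Coprime m) :
    Function.Injective fun i : Fin (m - 1) => t * ((i : ℕ) + 1) % m := by
  intro i j hij
  have hmod : ((i : ℕ) + 1) % m = ((j : ℕ) + 1) % m := Nat.ModEq.cancel_left_of_coprime ht.symm hij
  have := i.isLt
  have := j.isLt
  rw [Nat.mod_eq_of_lt (by omega), Nat.mod_eq_of_lt (by omega)] at hmod
  exact Fin.ext (by omega)

/-- Multiplication by `t` on the nonzero residues modulo `m`, the residue `r` sitting at index
`r - 1`. -/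
noncomputable def finMulModPerm (ht : t.Coprime m) : Equiv.Perm (Fin (m - 1)) :=
  Equiv.ofBijective (fun i => ⟨t * ((i : ℕ) + 1) % m - 1, by
      have := i.isLt
      have := Nat.mod_lt (t * ((i : ℕ) + 1)) (show 0 < m by omega)
      omega⟩) <|
    Finite.injective_iff_bijective.mp fun i j hij => ht.mul_succ_mod_injective <| by
      have := congrArg Fin.val hij
      have := ht.mul_succ_mod_pos i
      have := ht.mul_succ_mod_pos j
      simp only at *
      omega

lemma finMulModPerm_val_add_one (ht : t.Coprime m) (i : Fin (m - 1)) :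
    (ht.finMulModPerm i : ℕ) + 1 = t * ((i : ℕ) + 1) % m := by
  have := ht.mul_succ_mod_pos i
  simp only [finMulModPerm, Equiv.ofBijective_apply]
  omega

lemma pow_finMulModPerm_add_one {G : Type*} [Monoid G] {g : G} (hg : g ^ m = 1)
    (ht : t.Coprime m) (i : Fin (m - 1)) :
    g ^ ((ht.finMulModPerm i : ℕ) + 1) = (g ^ t) ^ ((i : ℕ) + 1) := by
  rw [finMulModPerm_val_add_one, ← pow_mul, ← pow_mod_orderOf g (_ % m),
    Nat.mod_mod_of_dvd _ (orderOf_dvd_of_pow_eq_one hg), pow_mod_orderOf]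

lemma of_orderOf_pow_eq {G : Type*} [LeftCancelMonoid G] [Finite G] {x : G}
    (h : orderOf (x ^ t) = orderOf x) : t.Coprime (orderOf x) := by
  rw [_root_.orderOf_pow, Nat.div_eq_self] at h
  exact Nat.Coprime.symm (h.resolve_left (orderOf_pos x).ne')

end Nat.Coprime

section JacobiMatrix

variable {F R : Type*} [CommRing F] [Fintype F] [CommRing R]

noncomputable def jacobiMatrix (η : MulChar F R) (m : ℕ) : Matrix (Fin (m - 1)) (Fin (m - 1)) R :=
  of fun i j => jacobiSum (η ^ ((i : ℕ) + 1)) (η ^ ((j : ℕ) + 1))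

lemma jacobiMatrix_pow {η : MulChar F R} {m t : ℕ} (hη : η ^ m = 1) (ht : t.Coprime m) :
    jacobiMatrix (η ^ t) m = (jacobiMatrix η m).submatrix ht.finMulModPerm ht.finMulModPerm := by
  ext i j
  simp only [jacobiMatrix, of_apply, submatrix_apply, ht.pow_finMulModPerm_add_one hη]

lemma det_jacobiMatrix_pow {η : MulChar F R} {m t : ℕ} (hη : η ^ m = 1) (ht : t.Coprime m) :
    (jacobiMatrix (η ^ t) m).det = (jacobiMatrix η m).det := by
  rw [jacobiMatrix_pow hη ht, det_submatrix_equiv_self]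

lemma det_jacobiMatrix_ringHomComp {S : Type*} [CommRing S] (η : MulChar F R) (m : ℕ)
    (f : R →+* S) : (jacobiMatrix (η.ringHomComp f) m).det = f (jacobiMatrix η m).det := by
  rw [RingHom.map_det]
  congr 1
  ext i j
  simp only [jacobiMatrix, of_apply, RingHom.mapMatrix_apply, map_apply, MulChar.ringHomComp_pow,
    jacobiSum_ringHomComp]

lemma MulChar.isIntegral_apply [IsDomain R] (χ : MulChar F R) (a : F) : IsIntegral ℤ (χ a) := by
  have hn := (orderOf_pos χ).ne'
  refine IsIntegral.of_pow (Nat.pos_of_ne_zero hn) ?_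
  rw [← MulChar.pow_apply' χ hn, pow_orderOf_eq_one]
  by_cases ha : IsUnit a
  · simpa [MulChar.one_apply ha] using isIntegral_one
  · simpa [MulChar.map_nonunit _ ha] using isIntegral_zero

lemma isIntegral_det_jacobiMatrix [IsDomain R] (η : MulChar F R) (m : ℕ) :
    IsIntegral ℤ (jacobiMatrix η m).det :=
  IsIntegral.det fun _ _ => IsIntegral.sum _ fun _ _ =>
    (MulChar.isIntegral_apply _ _).mul (MulChar.isIntegral_apply _ _)

end JacobiMatrix

lemma MulChar.exists_ringHomComp_eq {M R S : Type*} [CommMonoid M] [CommRing R] [CommRing S]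
    {f : R →+* S} (hf : Function.Injective f) (χ : MulChar M S) (hχ : ∀ a, χ a ∈ f.range) :
    ∃ χ' : MulChar M R, χ'.ringHomComp f = χ := by
  choose g hg using hχ
  refine ⟨{ toFun := g
            map_one' := hf (by rw [hg, map_one, map_one])
            map_mul' := fun a b => hf (by rw [map_mul, hg, hg, hg, map_mul])
            map_nonunit' := fun a ha => hf (by rw [hg, map_zero, map_nonunit χ ha]) },
    MulChar.ext' hg⟩

lemma MulChar.apply_mem_range_of_pow_eq_one {F R S : Type*} [Field F] [Finite F] [CommRing R]
    [CommRing S] [IsDomain S] {n : ℕ} [NeZero n] {χ : MulChar F S} (hχ : χ ^ n = 1)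
    (f : R →+* S) {ζ : R} (hζ : IsPrimitiveRoot (f ζ) n) (a : F) : χ a ∈ f.range := by
  rcases eq_or_ne a 0 with rfl | ha
  · exact ⟨0, by rw [map_zero, map_nonunit χ not_isUnit_zero]⟩
  · obtain ⟨j, -, hj⟩ := exists_apply_eq_pow hχ hζ ha
    exact ⟨ζ ^ j, by rw [map_pow, hj]⟩

namespace MulChar

variable {M R S : Type*} [CommMonoid M] [CommRing R] [CommRing S] {f : R →+* S}

lemma orderOf_ringHomComp (hf : Function.Injective f) (χ : MulChar M R) :
    orderOf (χ.ringHomComp f) = orderOf χ :=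
  orderOf_injective (ringHomCompHom f) (injective_ringHomComp hf) χ

lemma exists_pow_eq_of_ringHomComp (hf : Function.Injective f) {χ : MulChar M R}
    (hχ : ∀ ψ : MulChar M S, ∃ t : ℕ, ψ = χ.ringHomComp f ^ t) (ψ : MulChar M R) :
    ∃ t : ℕ, ψ = χ ^ t := by
  obtain ⟨t, ht⟩ := hχ (ψ.ringHomComp f)
  exact ⟨t, injective_ringHomComp hf (ht.trans (ringHomComp_pow χ f t))⟩

end MulChar

-- Mathlib's instance is stated for `CyclotomicField.algebra`, which does not unify with the
-- canonical `ℚ`-algebra structure `DivisionRing.toRatAlgebra`.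
instance CyclotomicField.isCyclotomicExtension_rat (n : ℕ) :
    IsCyclotomicExtension {n} ℚ (CyclotomicField n ℚ) := by
  have := CyclotomicField.instIsCyclotomicExtensionSingletonNatSetOfCharZero n ℚ
  rwa [Subsingleton.elim (CyclotomicField.algebra n ℚ) DivisionRing.toRatAlgebra] at this

section Generators

variable {F : Type*} [Field F] [Fintype F]

lemma det_jacobiMatrix_eq_of_orderOf_eq {R : Type*} [CommRing R] [IsDomain R]
    {χ ψ : MulChar F R} (hχ : ∀ ψ : MulChar F R, ∃ t : ℕ, ψ = χ ^ t) {k m : ℕ}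
    (hkm : orderOf χ = k * m) (hψ : orderOf ψ = orderOf χ) :
    (jacobiMatrix (ψ ^ k) m).det = (jacobiMatrix (χ ^ k) m).det := by
  obtain ⟨t, rfl⟩ := hχ ψ
  have ht : t.Coprime m :=
    (Nat.Coprime.of_orderOf_pow_eq hψ).coprime_dvd_right (hkm ▸ dvd_mul_left m k)
  rw [← pow_mul, mul_comm, pow_mul]
  exact det_jacobiMatrix_pow (by rw [← pow_mul, ← hkm, pow_orderOf_eq_one]) ht

lemma MulChar.orderOf_eq_card_sub_one_of_forall_exists_pow {χ : MulChar F ℂ}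
    (hχ : ∀ ψ : MulChar F ℂ, ∃ t : ℕ, ψ = χ ^ t) : orderOf χ = Fintype.card F - 1 := by
  have hn : Fintype.card F - 1 ≠ 0 := by have := Fintype.one_lt_card (α := F); omega
  obtain ⟨ψ, hψ⟩ := exists_mulChar_orderOf F dvd_rfl (Complex.isPrimitiveRoot_exp _ hn)
  obtain ⟨t, rfl⟩ := hχ ψ
  exact Nat.dvd_antisymm (orderOf_dvd_card_sub_one F χ) (hψ ▸ orderOf_pow_dvd t)

theorem exists_rat_det_jacobiMatrix {χ : MulChar F ℂ} (hχ : ∀ ψ : MulChar F ℂ, ∃ t : ℕ, ψ = χ ^ t)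
    {k m : ℕ} (hkm : k * m = Fintype.card F - 1) :
    ∃ r : ℚ, (jacobiMatrix (χ ^ k) m).det = r := by
  set n := Fintype.card F - 1
  have hord : orderOf χ = n := MulChar.orderOf_eq_card_sub_one_of_forall_exists_pow hχ
  have : NeZero n := ⟨hord ▸ (orderOf_pos χ).ne'⟩
  let φ : CyclotomicField n ℚ →ₐ[ℚ] ℂ := IsAlgClosed.lift
  have hφ : Function.Injective φ := φ.toRingHom.injective
  obtain ⟨χL, rfl⟩ := MulChar.exists_ringHomComp_eq hφ χ <|
    MulChar.apply_mem_range_of_pow_eq_one (hord ▸ pow_orderOf_eq_one χ) φ.toRingHom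
      ((IsCyclotomicExtension.zeta_spec n ℚ _).map_of_injective hφ)
  have hχL := MulChar.exists_pow_eq_of_ringHomComp hφ hχ
  have hordL : orderOf χL = k * m := by rw [← MulChar.orderOf_ringHomComp hφ, hord, hkm]
  have hfix (σ : CyclotomicField n ℚ ≃ₐ[ℚ] CyclotomicField n ℚ) :
      σ (jacobiMatrix (χL ^ k) m).det = (jacobiMatrix (χL ^ k) m).det := by
    rw [← RingHom.coe_coe σ, ← det_jacobiMatrix_ringHomComp, ← MulChar.ringHomComp_pow]
    exact det_jacobiMatrix_eq_of_orderOf_eq hχL hordL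
      (MulChar.orderOf_ringHomComp σ.injective χL)
  have := IsCyclotomicExtension.isGalois {n} ℚ (CyclotomicField n ℚ)
  obtain ⟨r, hr⟩ := (IsGalois.mem_range_algebraMap_iff_fixed _).mpr hfix
  refine ⟨r, ?_⟩
  rw [MulChar.ringHomComp_pow, det_jacobiMatrix_ringHomComp, ← hr]
  exact φ.commutes r

end Generators

theorem stmt11_general {F : Type*} [Field F] [Fintype F] (q k m : ℕ)
    (hq : Fintype.card F = q) (hk : k ∣ q - 1) (hm : m = (q - 1) / k) :
    ∃ z : ℤ, ∀ χ : MulChar F ℂ, (∀ ψ : MulChar F ℂ, ∃ t : ℕ, ψ = χ ^ t) →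
      Matrix.det (Matrix.of fun i j : Fin (m - 1) =>
        ∑ x : F, (χ ^ (k * ((i : ℕ) + 1))) x * (χ ^ (k * ((j : ℕ) + 1))) (1 - x)) =
        (z : ℂ) := by
  by_cases hgen : ∃ χ₀ : MulChar F ℂ, ∀ ψ : MulChar F ℂ, ∃ t : ℕ, ψ = χ₀ ^ t
  · obtain ⟨χ₀, hχ₀⟩ := hgen
    have hkm : k * m = Fintype.card F - 1 := by rw [hq, hm, Nat.mul_div_cancel' hk]
    have hord₀ := MulChar.orderOf_eq_card_sub_one_of_forall_exists_pow hχ₀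
    obtain ⟨r, hr⟩ := exists_rat_det_jacobiMatrix hχ₀ hkm
    obtain ⟨z, hz⟩ := (IsIntegral.exists_int_iff_exists_rat
      (isIntegral_det_jacobiMatrix (χ₀ ^ k) m)).mp ⟨r, hr⟩
    refine ⟨z, fun χ hχ => ?_⟩
    have hD : (jacobiMatrix (χ ^ k) m).det = (jacobiMatrix (χ₀ ^ k) m).det :=
      det_jacobiMatrix_eq_of_orderOf_eq hχ₀ (hord₀.trans hkm.symm)
        ((MulChar.orderOf_eq_card_sub_one_of_forall_exists_pow hχ).trans hord₀.symm)
    simp only [pow_mul]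
    exact hD.trans hz
  · exact ⟨0, fun χ hχ => absurd ⟨χ, hχ⟩ hgen⟩

theorem stmt11 {F : Type*} [Field F] [Fintype F] (q k m : ℕ)
    (hq : Fintype.card F = q) (hqpp : ∃ p n : ℕ, p.Prime ∧ 0 < n ∧ q = p ^ n)
    (hk0 : 0 < k) (hk : k ∣ q - 1) (hm : m = (q - 1) / k) :
    ∃ z : ℤ, ∀ χ : MulChar F ℂ, (∀ ψ : MulChar F ℂ, ∃ t : ℕ, ψ = χ ^ t) →
      Matrix.det (Matrix.of fun i j : Fin (m - 1) =>
        ∑ x : F, (χ ^ (k * ((i : ℕ) + 1))) x * (χ ^ (k * ((j : ℕ) + 1))) (1 - x)) =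
        (z : ℂ) :=
  stmt11_general q k m hq hk hm
end

section
/- Let q = p^n be a prime power, k a positive divisor of q-1 with m=(q-1)/k, and χ a generator of the character group of F_q^×. Then det[J_q(χ^{ki}, χ^{kj})]_{1≤i,j≤m-1} ≡ (-1)^{(k+1)(m^2-m)/2} (mod p), as a congruence of rational integers. -/
open Finset Polynomial

section Aux

variable {F : Type*} [Field F] [Fintype F] [DecidableEq F]

lemma aux_sum_units {M : Type*} [AddCommMonoid M] (f : F → M) (h0 : f 0 = 0) :
    ∑ x : F, f x = ∑ u : Fˣ, f ↑u := by
  have h1 : ∑ u : Fˣ, f ↑u = ∑ x : {a : F // a ≠ 0}, f x := by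
    rw [← Equiv.sum_comp (unitsEquivNeZero (G₀ := F)) (fun x : {a : F // a ≠ 0} => f ↑x)]
    simp
  rw [h1, ← Finset.sum_subtype (univ.filter (fun a : F => a ≠ 0)) (by simp) f, Finset.sum_filter]
  apply (Finset.sum_congr rfl ?_).symm
  intro x _
  by_cases hx : x = 0 <;> simp [hx, h0]

lemma aux_sum_pow (t : ℕ) (ht : t ≠ 0) :
    ∑ x : F, (x : F) ^ t = if (Fintype.card F - 1) ∣ t then -1 else 0 := by
  rw [aux_sum_units (fun x : F => x ^ t) (by simp [zero_pow ht])]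
  exact FiniteField.sum_pow_units F t

lemma aux_expand (a b : ℕ) (ha : 0 < a) :
    ∑ x : F, x ^ a * (1 - x) ^ b =
      ∑ c ∈ range (b + 1), ((-1 : F) ^ (c + b) * (b.choose c)) *
        (if (Fintype.card F - 1) ∣ (a + (b - c)) then -1 else 0) := by
  have h1 : ∀ x : F, x ^ a * (1 - x) ^ b
      = ∑ c ∈ range (b + 1), ((-1 : F) ^ (c + b) * (b.choose c)) * x ^ (a + (b - c)) := by
    intro x
    rw [sub_pow, Finset.mul_sum]
    apply Finset.sum_congr rfl
    intro c _
    rw [pow_add]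
    ring
  simp_rw [h1]
  rw [Finset.sum_comm]
  apply Finset.sum_congr rfl
  intro c _
  rw [← Finset.mul_sum, aux_sum_pow (a + (b - c)) (by omega)]

end Aux

section Aux2

variable {F : Type*} [Field F] [Fintype F] [DecidableEq F]

lemma aux_jac_lt (a b : ℕ) (ha : 0 < a) (hab : a + b < Fintype.card F - 1) :
    ∑ x : F, x ^ a * (1 - x) ^ b = 0 := by
  rw [aux_expand a b ha]
  apply Finset.sum_eq_zero
  intro c hc
  rw [if_neg, mul_zero]
  intro hdvd
  have := Nat.le_of_dvd (by omega) hdvd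
  omega

lemma aux_jac_eq (a b : ℕ) (ha : 0 < a) (hb : 0 < b) (hbQ : b < Fintype.card F - 1)
    (hab : a + b = Fintype.card F - 1) :
    ∑ x : F, x ^ a * (1 - x) ^ b = (-1 : F) ^ (b + 1) := by
  rw [aux_expand a b ha]
  rw [Finset.sum_eq_single 0]
  · rw [Nat.sub_zero, if_pos (hab ▸ dvd_refl _)]
    simp [pow_succ]
  · intro c hc hc0
    rw [if_neg, mul_zero]
    intro hdvd
    rw [Finset.mem_range] at hc
    have h1 : 0 < a + (b - c) := by omega
    have h2 : a + (b - c) < Fintype.card F - 1 := by omega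
    have := Nat.le_of_dvd h1 hdvd
    omega
  · simp

end Aux2

lemma aux_rev_decomp (r : ℕ) :
    (Fin.revPerm : Equiv.Perm (Fin (r + 1))) =
      Equiv.Perm.decomposeFin.symm (0, (Fin.revPerm : Equiv.Perm (Fin r))) * finRotate (r + 1) := by
  ext i
  refine Fin.lastCases ?_ (fun j => ?_) i
  · simp [Fin.rev_last]
  · rw [Equiv.Perm.mul_apply, finRotate_succ_apply, Fin.coeSucc_eq_succ,
      Equiv.Perm.decomposeFin_symm_apply_succ]
    simp [Fin.rev_castSucc]

lemma aux_sign_rev (r : ℕ) :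
    Equiv.Perm.sign (Fin.revPerm : Equiv.Perm (Fin r)) = (-1) ^ (r * (r - 1) / 2) := by
  induction r with
  | zero => simp [Subsingleton.elim (Fin.revPerm : Equiv.Perm (Fin 0)) 1]
  | succ n ih =>
    rw [aux_rev_decomp n, map_mul, Equiv.Perm.decomposeFin.symm_sign, sign_finRotate, if_pos rfl,
      one_mul, ih]
    rw [← pow_add]
    congr 1
    cases n with
    | zero => simp
    | succ m =>
      have e1 : 2 * ((m + 1) * m / 2) = (m + 1) * m :=
        Nat.two_mul_div_two_of_even (by rw [mul_comm]; exact Nat.even_mul_succ_self m)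
      have e2 : 2 * ((m + 1 + 1) * (m + 1) / 2) = (m + 1 + 1) * (m + 1) :=
        Nat.two_mul_div_two_of_even (by rw [mul_comm]; exact Nat.even_mul_succ_self (m + 1))
      have e3 : (m + 1 + 1) * (m + 1) = (m + 1) * m + 2 * (m + 1) := by ring
      simp only [Nat.add_sub_cancel]
      omega

lemma aux_nat (kk mm : ℕ) (hm : 1 ≤ mm) :
    (mm - 1) * (mm - 2) / 2 + (∑ i ∈ Finset.range (mm - 1), (kk * (mm - 1 - i) + 1)) =
      (kk + 1) * (mm ^ 2 - mm) / 2 := by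
  obtain ⟨r, rfl⟩ : ∃ r, mm = r + 1 := ⟨mm - 1, by omega⟩
  simp only [Nat.add_sub_cancel]
  have hrefl : ∑ i ∈ Finset.range r, (r - i) = ∑ i ∈ Finset.range r, (i + 1) := by
    have h := Finset.sum_range_reflect (fun j => j + 1) r
    rw [← h]
    apply Finset.sum_congr rfl
    intro j hj
    rw [Finset.mem_range] at hj
    omega
  have hsplit : ∑ i ∈ Finset.range r, (kk * (r - i) + 1) = kk * (∑ i ∈ Finset.range r, (r - i)) + r := by
    rw [Finset.sum_add_distrib, Finset.mul_sum, Finset.sum_const, Finset.card_range, smul_eq_mul,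
      mul_one]
  set G := ∑ i ∈ Finset.range r, i with hGdef
  have hG2 : G * 2 = r * (r - 1) := Finset.sum_range_id_mul_two r
  have hsum1 : ∑ i ∈ Finset.range r, (i + 1) = G + r := by
    rw [Finset.sum_add_distrib, Finset.sum_const, Finset.card_range, smul_eq_mul, mul_one]
  have hG : r * (r + 1 - 2) / 2 = G := by
    have h0 : r + 1 - 2 = r - 1 := by omega
    rw [h0, hGdef, Finset.sum_range_id]
  have h1 : (r + 1) ^ 2 = r * (r + 1) + (r + 1) := by ring
  have h2 : r * (r + 1) = r * (r - 1) + 2 * r := by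
    cases r with
    | zero => simp
    | succ s => simp only [Nat.add_sub_cancel]; ring
  have h3 : (r + 1) ^ 2 - (r + 1) = 2 * (G + r) := by rw [h1]; omega
  rw [hG, hsplit, hrefl, hsum1, h3]
  have h4 : (kk + 1) * (2 * (G + r)) = 2 * ((kk + 1) * (G + r)) := by ring
  rw [h4, Nat.mul_div_cancel_left _ (by norm_num : 0 < 2)]
  ring

theorem stmt12 {F : Type*} [Field F] [Fintype F] (p n q k m : ℕ)
    (hp : p.Prime) (hn : 0 < n) (hq : q = p ^ n) (hcard : Fintype.card F = q)
    (hk0 : 0 < k) (hk : k ∣ q - 1) (hm : m = (q - 1) / k)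
    (χ : MulChar F ℂ) (hχ : ∀ ψ : MulChar F ℂ, ∃ t : ℕ, ψ = χ ^ t)
    (z : ℤ)
    (hz : Matrix.det (Matrix.of fun i j : Fin (m - 1) =>
      ∑ x : F, (χ ^ (k * ((i : ℕ) + 1))) x * (χ ^ (k * ((j : ℕ) + 1))) (1 - x)) = (z : ℂ)) :
    z ≡ (-1) ^ ((k + 1) * (m ^ 2 - m) / 2) [ZMOD (p : ℤ)] := by
  classical
  have hq2 : 2 ≤ q := by
    have := Nat.one_lt_pow hn.ne' hp.one_lt
    omega
  have hQpos : 0 < q - 1 := by omega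
  have hkm : q - 1 = k * m := (Nat.mul_div_cancel' hk).symm.trans (by rw [hm])
  have hm1 : 1 ≤ m := by
    rcases Nat.eq_zero_or_pos m with h | h
    · rw [h, mul_zero] at hkm; omega
    · exact h
  have hcardU : Fintype.card Fˣ = q - 1 := by rw [Fintype.card_units, hcard]
  obtain ⟨g, hg⟩ := IsCyclic.exists_generator (α := Fˣ)
  have hdl0 : ∀ x : Fˣ, ∃ t : ℕ, g ^ t = x := fun x => by
    have := mem_powers_iff_mem_zpowers.mpr (hg x)
    rwa [Submonoid.mem_powers_iff] at this
  choose dl hdl using hdl0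
  have hχord : orderOf χ = q - 1 := by
    obtain ⟨ψ, hψ⟩ := MulChar.exists_mulChar_orderOf F (n := q - 1) (by rw [hcard])
      (Complex.isPrimitiveRoot_exp (q - 1) hQpos.ne')
    obtain ⟨t, rfl⟩ := hχ ψ
    have h2 : orderOf χ ∣ q - 1 := by
      have := MulChar.orderOf_dvd_card_sub_one F χ
      rwa [hcard] at this
    exact Nat.dvd_antisymm h2 (hψ ▸ orderOf_pow_dvd t)
  set ζ := χ ↑g with hζdef
  have hζpow : ∀ d : ℕ, χ ^ d = 1 ↔ ζ ^ d = 1 := by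
    intro d
    rcases Nat.eq_zero_or_pos d with rfl | hd
    · simp
    constructor
    · intro h
      rw [hζdef, ← MulChar.pow_apply' χ hd.ne', h, MulChar.one_apply_coe]
    · intro h
      apply MulChar.ext
      intro u
      rw [MulChar.pow_apply' χ hd.ne', MulChar.one_apply_coe, ← hdl u,
        Units.val_pow_eq_pow_val, map_pow, ← pow_mul, mul_comm, pow_mul, h, one_pow]
  have hζord : orderOf ζ = q - 1 := by
    rw [← hχord]
    exact (orderOf_eq_orderOf_iff.mpr fun d => (hζpow d).symm)
  have hζprim : IsPrimitiveRoot ζ (q - 1) := hζord ▸ IsPrimitiveRoot.orderOf ζ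
  -- polynomial lift of the matrix
  set P : Matrix (Fin (m - 1)) (Fin (m - 1)) (Polynomial ℤ) := Matrix.of fun i j =>
    ∑ x : Fˣ, if h : (x : F) = 1 then 0 else
      X ^ (k * ((i : ℕ) + 1) * dl x +
        k * ((j : ℕ) + 1) * dl (Units.mk0 (1 - (x : F)) (sub_ne_zero.mpr (Ne.symm h)))) with hPdef
  have hchival : ∀ u : Fˣ, χ (u : F) = ζ ^ dl u := by
    intro u
    conv_lhs => rw [← hdl u]
    rw [Units.val_pow_eq_pow_val, map_pow]
  have hchipow : ∀ (e : ℕ) (u : Fˣ), e ≠ 0 → (χ ^ e) (u : F) = ζ ^ (e * dl u) := by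
    intro e u he
    rw [MulChar.pow_apply' χ he, hchival, ← pow_mul, mul_comm]
  have hPC : ∀ i j, aeval ζ (P i j) =
      ∑ x : F, (χ ^ (k * ((i : ℕ) + 1))) x * (χ ^ (k * ((j : ℕ) + 1))) (1 - x) := by
    intro i j
    rw [aux_sum_units (fun x : F => (χ ^ (k * ((i : ℕ) + 1))) x * (χ ^ (k * ((j : ℕ) + 1))) (1 - x))
      (by simp only [MulChar.map_zero, zero_mul])]
    rw [hPdef, Matrix.of_apply, map_sum]
    apply Finset.sum_congr rfl
    intro u _
    by_cases h : (u : F) = 1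
    · rw [dif_pos h, map_zero, h, sub_self, MulChar.map_zero, mul_zero]
    · rw [dif_neg h, map_pow, aeval_X, pow_add]
      have e1 := hchipow (k * ((i : ℕ) + 1)) u (by positivity)
      have e2 := hchipow (k * ((j : ℕ) + 1))
        (Units.mk0 (1 - (u : F)) (sub_ne_zero.mpr (Ne.symm h))) (by positivity)
      rw [Units.val_mk0] at e2
      rw [e1, e2]
  have hPF : ∀ i j, aeval ((g : Fˣ) : F) (P i j) =
      ∑ x : F, x ^ (k * ((i : ℕ) + 1)) * (1 - x) ^ (k * ((j : ℕ) + 1)) := by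
    intro i j
    rw [aux_sum_units (fun x : F => x ^ (k * ((i : ℕ) + 1)) * (1 - x) ^ (k * ((j : ℕ) + 1)))
      (by simp only [ne_eq, zero_pow (by positivity : k * ((i:ℕ)+1) ≠ 0), zero_mul])]
    rw [hPdef, Matrix.of_apply, map_sum]
    apply Finset.sum_congr rfl
    intro u _
    by_cases h : (u : F) = 1
    · rw [dif_pos h, map_zero, h, sub_self, zero_pow (by positivity), mul_zero]
    · rw [dif_neg h, map_pow, aeval_X, pow_add]
      have e1 : ((g : F)) ^ (k * ((i : ℕ) + 1) * dl u) = (u : F) ^ (k * ((i : ℕ) + 1)) := by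
        rw [mul_comm, pow_mul, ← Units.val_pow_eq_pow_val, hdl u]
      have e2 : ((g : F)) ^ (k * ((j : ℕ) + 1) *
          dl (Units.mk0 (1 - (u : F)) (sub_ne_zero.mpr (Ne.symm h)))) =
          (1 - (u : F)) ^ (k * ((j : ℕ) + 1)) := by
        rw [mul_comm, pow_mul, ← Units.val_pow_eq_pow_val, hdl _, Units.val_mk0]
      rw [e1, e2]
  -- determinant over ℂ
  have hdet1 : aeval ζ P.det = (z : ℂ) := by
    rw [AlgHom.map_det (aeval ζ) P, ← hz]
    congr 1
    ext i j
    exact hPC i j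
  -- divisibility by the cyclotomic polynomial
  have hdvd : minpoly ℤ ζ ∣ P.det - C z :=
    minpoly.isIntegrallyClosed_dvd (hζprim.isIntegral hQpos)
      (by rw [map_sub, aeval_C, hdet1]; simp)
  rw [← Polynomial.cyclotomic_eq_minpoly hζprim hQpos] at hdvd
  obtain ⟨c, hc⟩ := hdvd
  -- transfer to F
  have hgF : IsPrimitiveRoot ((g : F)) (q - 1) := by
    have : orderOf ((g : F)) = q - 1 := by
      rw [orderOf_units, orderOf_eq_card_of_forall_mem_zpowers hg, Nat.card_eq_fintype_card, hcardU]
    exact this ▸ IsPrimitiveRoot.orderOf ((g : F))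
  have hcyc0 : aeval ((g : F)) (cyclotomic (q - 1) ℤ) = 0 := by
    have h1 : IsRoot (cyclotomic (q - 1) F) ((g : F)) := hgF.isRoot_cyclotomic hQpos
    rw [aeval_def, eval₂_eq_eval_map, algebraMap_int_eq, map_cyclotomic_int]
    exact h1
  have hzF : aeval ((g : F)) P.det = ((z : ℤ) : F) := by
    have := congrArg (aeval ((g : F))) hc
    rw [map_sub, map_mul, hcyc0, zero_mul, aeval_C, algebraMap_int_eq, eq_intCast] at this
    exact sub_eq_zero.mp this
  -- the matrix over F
  set N : Matrix (Fin (m - 1)) (Fin (m - 1)) F := Matrix.of fun i j =>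
    ∑ x : F, x ^ (k * ((i : ℕ) + 1)) * (1 - x) ^ (k * ((j : ℕ) + 1)) with hNdef
  have hNz : N.det = ((z : ℤ) : F) := by
    rw [← hzF, AlgHom.map_det (aeval ((g : F))) P]
    congr 1
    ext i j
    exact (hPF i j).symm
  have hQF : Fintype.card F - 1 = q - 1 := by rw [hcard]
  have hrev : ∀ j : Fin (m - 1), ((Fin.revPerm j : Fin (m - 1)) : ℕ) = m - 2 - (j : ℕ) := by
    intro j
    have := j.isLt
    simp only [Fin.revPerm_apply, Fin.val_rev]
    omega
  have hNij_lt : ∀ i j : Fin (m - 1), (i : ℕ) < (j : ℕ) → N i (Fin.revPerm j) = 0 := by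
    intro i j hij
    have hi2 := i.isLt
    have hj2 := j.isLt
    rw [hNdef, Matrix.of_apply, hrev j]
    apply aux_jac_lt _ _ (by positivity)
    rw [hQF, hkm]
    have he : k * ((i : ℕ) + 1) + k * ((m - 2 - (j : ℕ)) + 1)
        = k * (((i : ℕ) + 1) + ((m - 2 - (j : ℕ)) + 1)) := by ring
    rw [he]
    exact mul_lt_mul_of_pos_left (by omega) hk0
  have hNdiag : ∀ i : Fin (m - 1), N i (Fin.revPerm i) = (-1 : F) ^ (k * (m - 1 - (i : ℕ)) + 1) := by
    intro i
    have hi2 := i.isLt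
    rw [hNdef, Matrix.of_apply, hrev i]
    have hb : m - 2 - (i : ℕ) + 1 = m - 1 - (i : ℕ) := by omega
    rw [hb]
    apply aux_jac_eq _ _ (by positivity) (by
      have : 1 ≤ m - 1 - (i : ℕ) := by omega
      positivity)
    · rw [hQF, hkm]
      exact mul_lt_mul_of_pos_left (by omega) hk0
    · rw [hQF, hkm, ← Nat.mul_add]
      congr 1
      omega
  have hTri : (N.submatrix id Fin.revPerm).det = ∏ i : Fin (m - 1), N i (Fin.revPerm i) := by
    apply Matrix.det_of_lowerTriangular
    intro i j hij
    exact hNij_lt i j hij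
  have hPerm := Matrix.det_permute' Fin.revPerm N
  rw [hTri] at hPerm
  have hprod : ∏ i : Fin (m - 1), N i (Fin.revPerm i)
      = (-1 : F) ^ (∑ i ∈ Finset.range (m - 1), (k * (m - 1 - i) + 1)) := by
    calc ∏ i : Fin (m - 1), N i (Fin.revPerm i)
        = ∏ i : Fin (m - 1), (-1 : F) ^ (k * (m - 1 - (i : ℕ)) + 1) :=
          Finset.prod_congr rfl (fun i _ => hNdiag i)
      _ = (-1 : F) ^ (∑ i : Fin (m - 1), (k * (m - 1 - (i : ℕ)) + 1)) :=
          Finset.prod_pow_eq_pow_sum _ _ _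
      _ = (-1 : F) ^ (∑ i ∈ Finset.range (m - 1), (k * (m - 1 - i) + 1)) :=
          congrArg (fun t => (-1 : F) ^ t)
            (Fin.sum_univ_eq_sum_range (fun i => k * (m - 1 - i) + 1) (m - 1))
  rw [hprod, aux_sign_rev] at hPerm
  push_cast at hPerm
  have hA : (-1 : F) ^ ((m - 1) * (m - 1 - 1) / 2) * (-1 : F) ^ ((m - 1) * (m - 1 - 1) / 2) = 1 := by
    rw [← pow_add]
    exact Even.neg_one_pow ⟨_, rfl⟩
  have hNdet : N.det = (-1 : F) ^ ((m - 1) * (m - 1 - 1) / 2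
      + ∑ i ∈ Finset.range (m - 1), (k * (m - 1 - i) + 1)) := by
    calc N.det = 1 * N.det := (one_mul _).symm
      _ = (-1 : F) ^ ((m - 1) * (m - 1 - 1) / 2) *
          ((-1 : F) ^ ((m - 1) * (m - 1 - 1) / 2) * N.det) := by rw [← mul_assoc, hA]
      _ = (-1 : F) ^ ((m - 1) * (m - 1 - 1) / 2) *
          (-1 : F) ^ (∑ i ∈ Finset.range (m - 1), (k * (m - 1 - i) + 1)) := by rw [← hPerm]
      _ = _ := by rw [← pow_add]
  have hEXP : (m - 1) * (m - 2) / 2 + (∑ i ∈ Finset.range (m - 1), (k * (m - 1 - i) + 1))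
      = (k + 1) * (m ^ 2 - m) / 2 := aux_nat k m hm1
  have hmm : m - 1 - 1 = m - 2 := by omega
  rw [hmm] at hNdet
  have hfinal : ((z : ℤ) : F) = (((-1) ^ ((k + 1) * (m ^ 2 - m) / 2) : ℤ) : F) := by
    rw [← hNz, hNdet, hEXP]
    push_cast
    ring
  have hcharF : CharP F p := by
    obtain ⟨n', hpr, hcard2⟩ := FiniteField.card F (ringChar F)
    have hd : p ∣ ringChar F ^ (n' : ℕ) := by
      rw [← hcard2, hcard, hq]
      exact dvd_pow_self p hn.ne'
    have hpr2 : p = ringChar F := (Nat.prime_dvd_prime_iff_eq hp hpr).mp (hp.dvd_of_dvd_pow hd)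
    rw [hpr2]
    exact ringChar.charP F
  have hzero : ((z - (-1) ^ ((k + 1) * (m ^ 2 - m) / 2) : ℤ) : F) = 0 := by
    push_cast
    push_cast at hfinal
    rw [hfinal]
    ring
  have hdvd2 : (p : ℤ) ∣ (z - (-1) ^ ((k + 1) * (m ^ 2 - m) / 2)) :=
    (CharP.intCast_eq_zero_iff F p _).mp hzero
  exact (Int.modEq_iff_dvd.mpr hdvd2).symm
end

section
/- Let q = p^n be a prime power, k a positive divisor of q-1, and m = (q-1)/k. Then det[C(ki+kj, ki)]_{1≤i,j≤m-1} ≡ (-1)^{((k+1)m^2-(k-1)m-2)/2} (mod p), where C denotes the binomial coefficient. -/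
/-!
Reduce modulo `p`. With `q = p ^ n`, adding `a, b < q` with `q ≤ a + b` carries into the digit of
`p ^ n`, so `p ∣ C(a + b, a)` by Kummer's theorem; since `k * m = q - 1`, the matrix therefore
vanishes strictly below its antidiagonal, where `k * i + k * j = q - 1`. Pascal's rule together
with `p ∣ C(q, r)` for `0 < r < q` gives `C(q - 1, r) ≡ (-1) ^ r`, so the determinant is
`(-1) ^ C(m - 1, 2)` times the antidiagonal product `(-1) ^ (k * C(m, 2))`, and only parities
remain.
-/

theorem Nat.Prime.dvd_choose_of_lt_pow_of_pow_le_add {p n a b : ℕ} (hp : p.Prime)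
    (ha : a < p ^ n) (hb : b < p ^ n) (hab : p ^ n ≤ a + b) : p ∣ (a + b).choose a := by
  have hn : n ≠ 0 := by rintro rfl; rw [pow_zero] at ha hb hab; omega
  have hlog : Nat.log p (a + b) < n + 1 :=
    Nat.log_lt_of_lt_pow (by omega) (by rw [pow_succ]; nlinarith [hp.two_le])
  have hcarry : n ∈ {i ∈ Finset.Ico 1 (n + 1) | p ^ i ≤ a % p ^ i + b % p ^ i} := by
    simp [Nat.mod_eq_of_lt ha, Nat.mod_eq_of_lt hb, hab, Nat.one_le_iff_ne_zero.2 hn]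
  rw [← emultiplicity_ne_zero, hp.emultiplicity_choose (Nat.le_add_right a b) hlog,
    Nat.add_sub_cancel_left]
  exact_mod_cast Finset.card_ne_zero_of_mem hcarry

theorem Nat.Prime.choose_pow_sub_one_eq_neg_one_pow {p n r : ℕ} (hp : p.Prime) (hr : r < p ^ n) :
    ((p ^ n - 1).choose r : ZMod p) = (-1) ^ r := by
  induction r with
  | zero => simp
  | succ r ih =>
    have hpascal : (p ^ n).choose (r + 1) = (p ^ n - 1).choose r + (p ^ n - 1).choose (r + 1) := by
      simpa only [Nat.sub_add_cancel (Nat.one_le_pow _ _ hp.pos)] using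
        Nat.choose_succ_succ' (p ^ n - 1) r
    have hvanish : ((p ^ n).choose (r + 1) : ZMod p) = 0 :=
      (ZMod.natCast_eq_zero_iff _ _).2 (hp.dvd_choose_pow r.succ_ne_zero hr.ne)
    rw [hpascal, Nat.cast_add, ih (by omega)] at hvanish
    linear_combination hvanish

theorem Matrix.det_of_upperAntitriangular {R : Type*} [CommRing R] {N : ℕ}
    (A : Matrix (Fin N) (Fin N) R) (h : ∀ i j : Fin N, N ≤ (i : ℕ) + j → A i j = 0) :
    A.det = (-1) ^ N.choose 2 * ∏ i, A i i.rev := by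
  induction N with
  | zero => simp
  | succ N ih =>
    have hlast (j : Fin (N + 1)) (hj : j ≠ 0) : A (Fin.last N) j = 0 :=
      h _ _ (by simp [Fin.val_last, Nat.one_le_iff_ne_zero, Fin.val_ne_zero_iff.2 hj])
    rw [Matrix.det_succ_row A (Fin.last N),
      Fintype.sum_eq_single 0 fun j hj => by simp [hlast j hj]]
    simp only [Fin.succAbove_last, Fin.succAbove_zero]
    rw [ih (A.submatrix Fin.castSucc Fin.succ) fun i j hij => h _ _ (by simp; omega),
      Fin.prod_univ_castSucc, Nat.choose_succ_succ', Nat.choose_one_right]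
    simp only [Fin.val_last, Fin.val_zero, add_zero, Matrix.submatrix_apply, pow_add,
      Fin.rev_castSucc, Fin.rev_last]
    ring

theorem quadratic_div_two_eq_choose_two_add {k m : ℕ} (hk : 1 ≤ k) :
    ((k + 1) * m ^ 2 - (k - 1) * m - 2) / 2 = (m - 1).choose 2 + k * m.choose 2 + 2 * (m - 1) := by
  obtain ⟨K, rfl⟩ : ∃ K, k = K + 1 := ⟨k - 1, by omega⟩
  obtain _ | N := m
  · simp
  have hpascal : (N + 1).choose 2 = N + N.choose 2 := by
    rw [Nat.choose_succ_succ', Nat.choose_one_right]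
  have hdouble := Nat.add_one_mul_choose_eq N 1
  rw [hpascal, Nat.choose_one_right] at hdouble
  rw [hpascal, Nat.add_sub_cancel, Nat.add_sub_cancel]
  have : (K + 1 + 1) * (N + 1) ^ 2 =
      2 * (N.choose 2 + (K + 1) * (N + N.choose 2) + 2 * N) + K * (N + 1) + 2 := by
    nlinarith
  omega

theorem sum_range_pred_add_one_eq_choose_two (m : ℕ) :
    ∑ i ∈ Finset.range (m - 1), (i + 1) = m.choose 2 := by
  obtain _ | M := m
  · simp
  rw [Nat.add_sub_cancel, Nat.choose_two_right, ← Finset.sum_range_id, Finset.sum_range_succ',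
    add_zero]

theorem det_choose_matrix_zmod_eq_neg_one_pow {p n k m : ℕ} (hp : p.Prime) (hk : 0 < k)
    (hkm : k * m = p ^ n - 1) :
    (Matrix.of fun i j : Fin (m - 1) =>
        ((k * ((i : ℕ) + 1) + k * ((j : ℕ) + 1)).choose (k * ((i : ℕ) + 1)) : ZMod p)).det =
      (-1) ^ ((m - 1).choose 2 + k * m.choose 2) := by
  have hle (i : Fin (m - 1)) : k * ((i : ℕ) + 1) + k ≤ p ^ n - 1 := by
    rw [← hkm, ← mul_add_one]
    exact Nat.mul_le_mul_left k (by omega)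
  rw [Matrix.det_of_upperAntitriangular]
  · have hanti (i : Fin (m - 1)) : k * ((i : ℕ) + 1) + k * ((i.rev : ℕ) + 1) = p ^ n - 1 := by
      rw [← mul_add, ← hkm, Fin.val_rev]
      congr 1
      omega
    simp only [Matrix.of_apply, hanti]
    rw [Finset.prod_congr rfl fun i _ =>
        hp.choose_pow_sub_one_eq_neg_one_pow (by have := hle i; omega),
      Finset.prod_pow_eq_pow_sum, ← pow_add, Fin.sum_univ_eq_sum_range (fun i => k * (i + 1)),
      ← Finset.mul_sum, sum_range_pred_add_one_eq_choose_two]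
  · intro i j hij
    rw [Matrix.of_apply, ZMod.natCast_eq_zero_iff]
    refine hp.dvd_choose_of_lt_pow_of_pow_le_add (n := n)
      (by have := hle i; omega) (by have := hle j; omega) ?_
    have := Nat.mul_le_mul_left k (show m + 1 ≤ (i : ℕ) + 1 + ((j : ℕ) + 1) by omega)
    rw [mul_add_one, mul_add] at this
    omega

theorem stmt13_general (p n q k m : ℕ) (hp : p.Prime) (hq : q = p ^ n)
    (hk : k ∣ q - 1) (hm : m = (q - 1) / k) :
    Matrix.det (Matrix.of fun i j : Fin (m - 1) =>
        ((k * ((i : ℕ) + 1) + k * ((j : ℕ) + 1)).choose (k * ((i : ℕ) + 1)) : ℤ))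
      ≡ (-1) ^ (((k + 1) * m ^ 2 - (k - 1) * m - 2) / 2) [ZMOD (p : ℤ)] := by
  obtain rfl | hm0 := Nat.eq_zero_or_pos m
  · simp
  have hk0 : 0 < k := Nat.pos_of_ne_zero fun h => by simp [h] at hm; omega
  have hkm : k * m = p ^ n - 1 := by rw [hm, ← hq, Nat.mul_div_cancel' hk]
  rw [← ZMod.intCast_eq_intCast_iff, Int.cast_det, quadratic_div_two_eq_choose_two_add hk0]
  convert det_choose_matrix_zmod_eq_neg_one_pow hp hk0 hkm using 1
  · congr 1
    ext i j
    simp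
  · simp [pow_add, pow_mul]

theorem stmt13 (p n q k m : ℕ) (hp : p.Prime) (hn : 0 < n) (hq : q = p ^ n)
    (hk0 : 0 < k) (hk : k ∣ q - 1) (hm : m = (q - 1) / k) :
    Matrix.det (Matrix.of fun i j : Fin (m - 1) =>
        ((k * ((i : ℕ) + 1) + k * ((j : ℕ) + 1)).choose (k * ((i : ℕ) + 1)) : ℤ))
      ≡ (-1) ^ (((k + 1) * m ^ 2 - (k - 1) * m - 2) / 2) [ZMOD (p : ℤ)] :=
  stmt13_general p n q k m hp hq hk hm
end
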